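/- arXiv:1501.03880 — 8 statements merged into one kernel-verified Lean document; each statement's English description precedes it below -/
import Mathlib

section
/- For positive integers m, k, n with 1 <= m <= n-k, the binomial-Pochhammer identity holds: C(n-m-1, k-1)*C(m+k-1, m)*(Y)_m + C(n-m-1, k)*C(m+k-1, m)*(Y)_m - C(n-m, k)*C(m+k-2, m-1)*(k+m-1)*(Y)_{m-1} = C(n-m, k)*C(m+k-1, m)*(Y-1)_m, where (a)_j = a(a+1)...(a+j-1) denotes the rising factorial and Y is an indeterminate (or arbitrary real/complex number). -/
/-- The rising factorial (Pochhammer symbol) `(a)_j = a(a+1)⋯(a+j-1)`. -/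
def rf {R : Type} [CommRing R] (a : R) (j : ℕ) : R := ∏ i ∈ Finset.range j, (a + i)

lemma rf_succ {R : Type} [CommRing R] (a : R) (j : ℕ) :
    rf a (j+1) = rf a j * (a + j) := by
  simp [rf, Finset.prod_range_succ]

lemma rf_succ' {R : Type} [CommRing R] (a : R) (j : ℕ) :
    rf a (j+1) = a * rf (a+1) j := by
  rw [rf, Finset.prod_range_succ']
  simp [rf, mul_comm]
  congr 1
  apply Finset.prod_congr rfl
  intro i _
  push_cast
  ring

theorem stmt0 {R : Type} [CommRing R] (Y : R) (m k n : ℕ)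
    (hm : 1 ≤ m) (hk : 1 ≤ k) (hn : 1 ≤ n) (hmn : m + k ≤ n) :
    ((n - m - 1).choose (k - 1) : R) * ((m + k - 1).choose m : R) * rf Y m
      + ((n - m - 1).choose k : R) * ((m + k - 1).choose m : R) * rf Y m
      - ((n - m).choose k : R) * ((m + k - 2).choose (m - 1) : R) * ((k + m - 1 : ℕ) : R)
          * rf Y (m - 1)
      = ((n - m).choose k : R) * ((m + k - 1).choose m : R) * rf (Y - 1) m := by
  obtain ⟨m, rfl⟩ : ∃ m', m = m' + 1 := ⟨m - 1, by omega⟩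
  obtain ⟨k, rfl⟩ : ∃ k', k = k' + 1 := ⟨k - 1, by omega⟩
  have e1 : m + 1 + (k + 1) - 1 = m + k + 1 := by omega
  have e2 : m + 1 + (k + 1) - 2 = m + k := by omega
  have e3 : k + 1 + (m + 1) - 1 = k + m + 1 := by omega
  have e4 : k + 1 - 1 = k := by omega
  have e5 : m + 1 - 1 = m := by omega
  rw [e1, e2, e3, e4, e5]
  have h1 : n - (m + 1) = (n - (m + 1) - 1) + 1 := by omega
  have hpascal : (n - (m + 1)).choose (k + 1)
      = (n - (m + 1) - 1).choose k + (n - (m + 1) - 1).choose (k + 1) := by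
    rw [h1]; exact Nat.choose_succ_succ' _ _
  have hch : (m + k).choose m * (k + m + 1) = (m + k + 1).choose (m + 1) * (m + 1) := by
    have h := Nat.add_one_mul_choose_eq (m + k) m
    rw [← h]; ring
  have hrf1 : rf Y (m + 1) = rf Y m * (Y + m) := rf_succ Y m
  have hrf2 : rf (Y - 1) (m + 1) = (Y - 1) * rf Y m := by
    have := rf_succ' (Y - 1) m
    simpa using this
  rw [hpascal, hrf1, hrf2]
  have hch' : ((m + k).choose m * (k + m + 1) : R) = ((m + k + 1).choose (m + 1) * (m + 1) : R) := by
    exact_mod_cast congrArg (Nat.cast : ℕ → R) hch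
  push_cast at hch' ⊢
  linear_combination (-(((n - (m + 1) - 1).choose k : R) + ((n - (m + 1) - 1).choose (k + 1) : R)) * rf Y m) * hch'
end

section
/- Let mu_n(b, lambda) denote the n-th moment of the orthogonal polynomial sequence defined by the three-term recurrence p_{n+1}(x) = (x - b_n) p_n(x) - lambda_n p_{n-1}(x) (equivalently, mu_n is the sum over Motzkin paths of length n of products of weights: 1 for up steps, b_k for level steps at height k, lambda_k for down steps from height k). Then for the parameters b_k = 2k+2 and lambda_k = k(k+1), we have mu_n = (n+1)! for all n >= 0. -/
/-- `mwalk b lam n h` is the weighted sum over Motzkin paths of length `n` from height `h`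
down to height `0`, where an up step has weight `1`, a level step at height `k` has weight
`b k`, and a down step from height `k` (to height `k-1`) has weight `lam k`.
The `n`-th moment of the orthogonal polynomial sequence with recurrence coefficients
`b`, `lam` is `mwalk b lam n 0`. -/
def mwalk {R : Type} [CommRing R] (b lam : ℕ → R) : ℕ → ℕ → R
  | 0, h => if h = 0 then 1 else 0
  | n + 1, 0 => mwalk b lam n 1 + b 0 * mwalk b lam n 0
  | n + 1, h + 1 =>
      mwalk b lam n (h + 2) + b (h + 1) * mwalk b lam n (h + 1) + lam (h + 1) * mwalk b lam n h

private def P (n h : ℕ) : ℚ := ∏ i ∈ Finset.range h, ((n : ℚ) - i)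

private lemma P_succ (n h : ℕ) : P n (h + 1) = P n h * ((n : ℚ) - h) :=
  Finset.prod_range_succ _ _

private lemma P_zero (n : ℕ) : P n 0 = 1 := rfl

private lemma P_shift (n h : ℕ) : P (n + 1) (h + 1) = ((n : ℚ) + 1) * P n h := by
  rw [P, Finset.prod_range_succ']
  push_cast
  simp only [show ∀ i : ℕ, ((n : ℚ) + 1 - ((i : ℚ) + 1)) = (n : ℚ) - i from fun i => by ring]
  rw [P]
  ring

private lemma P_zero_left (h : ℕ) : P 0 (h + 1) = 0 := by
  exact Finset.prod_eq_zero (Finset.mem_range.mpr (Nat.succ_pos h)) (by simp)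

private lemma mwalk_eq (n h : ℕ) :
    mwalk (fun k => 2 * (k : ℚ) + 2) (fun k => (k : ℚ) * ((k : ℚ) + 1)) n h
      = ((n + 1).factorial : ℚ) * P n h := by
  induction n generalizing h with
  | zero =>
    cases h with
    | zero => simp [mwalk, P_zero]
    | succ k => simp [mwalk, P_zero_left]
  | succ n ih =>
    cases h with
    | zero =>
      rw [mwalk, ih, ih, P_succ, Nat.factorial_succ (n + 1)]
      simp only [P_zero]
      push_cast
      ring
    | succ h =>
      rw [mwalk, ih, ih, ih, P_shift, P_succ, P_succ, Nat.factorial_succ (n + 1)]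
      push_cast
      ring

theorem stmt5 (n : ℕ) :
    mwalk (fun k => 2 * (k : ℚ) + 2) (fun k => (k : ℚ) * ((k : ℚ) + 1)) n 0
      = ((n + 1).factorial : ℚ) := by
  rw [mwalk_eq, P_zero, mul_one]
end

section
/- Let mu_n(b, lambda) be the moment functional defined via weighted Motzkin paths for recurrence coefficients (b_k), (lambda_k). Given a sequence (a_k)_{k>=0} with a_0 = 0, the even moments of the symmetric sequence (all b_k = 0, lambda_k = a_k) satisfy mu_{2n}(0, a) = mu_n(b', lambda') where b'_k = a_{2k} + a_{2k+1} and lambda'_k = a_{2k-1} a_{2k}. -/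
lemma mwalk_zero {R : Type} [CommRing R] (b lam : ℕ → R) (h : ℕ) :
    mwalk b lam 0 h = if h = 0 then 1 else 0 := rfl

lemma mwalk_succ_zero {R : Type} [CommRing R] (b lam : ℕ → R) (n : ℕ) :
    mwalk b lam (n + 1) 0 = mwalk b lam n 1 + b 0 * mwalk b lam n 0 := rfl

lemma mwalk_succ_succ {R : Type} [CommRing R] (b lam : ℕ → R) (n h : ℕ) :
    mwalk b lam (n + 1) (h + 1) =
      mwalk b lam n (h + 2) + b (h + 1) * mwalk b lam n (h + 1)
        + lam (h + 1) * mwalk b lam n h := rfl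

/-- Two steps of the symmetric walk, contracted. -/
lemma sym_two {R : Type} [CommRing R] (a : ℕ → R) (ha0 : a 0 = 0) (m k : ℕ) :
    mwalk (fun _ => 0) a (m + 2) (2 * k)
      = mwalk (fun _ => 0) a m (2 * k + 2)
        + (a (2 * k) + a (2 * k + 1)) * mwalk (fun _ => 0) a m (2 * k)
        + a (2 * k - 1) * a (2 * k) * mwalk (fun _ => 0) a m (2 * k - 2) := by
  cases k with
  | zero =>
    rw [show (2 * 0 : ℕ) = 0 from rfl]
    rw [mwalk_succ_zero, show (1 : ℕ) = 0 + 1 from rfl, mwalk_succ_succ]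
    simp [ha0]
  | succ k =>
    rw [show (2 * (k + 1) : ℕ) = (2 * k + 1) + 1 by ring]
    rw [mwalk_succ_succ]
    rw [show (2 * k + 1 + 2 : ℕ) = (2 * k + 2) + 1 by ring, mwalk_succ_succ]
    rw [mwalk_succ_succ (n := m) (h := 2 * k)]
    rw [show (2 * k + 1 + 1 - 1 : ℕ) = 2 * k + 1 by omega,
      show (2 * k + 1 + 1 - 2 : ℕ) = 2 * k by omega,
      show (2 * k + 2 + 2 : ℕ) = 2 * k + 1 + 1 + 2 by ring]
    ring

lemma stmt6_key {R : Type} [CommRing R] (a : ℕ → R) (ha0 : a 0 = 0) :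
    ∀ n h : ℕ,
      mwalk (fun k => a (2 * k) + a (2 * k + 1)) (fun k => a (2 * k - 1) * a (2 * k)) n h
        = mwalk (fun _ => 0) a (2 * n) (2 * h) := by
  intro n
  induction n with
  | zero =>
    intro h
    simp [mwalk_zero]
  | succ n ih =>
    intro h
    rw [show 2 * (n + 1) = 2 * n + 2 by ring, sym_two a ha0]
    cases h with
    | zero =>
      rw [mwalk_succ_zero]
      rw [show (1 : ℕ) = 0 + 1 from rfl] at ih ⊢
      rw [ih, ih]
      norm_num [ha0]
    | succ h =>
      rw [mwalk_succ_succ]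
      rw [ih, ih, ih]
      rw [show (2 * (h + 2) : ℕ) = 2 * (h + 1) + 2 by ring,
        show (2 * (h + 1) - 2 : ℕ) = 2 * h by omega]

theorem stmt6 {R : Type} [CommRing R] (a : ℕ → R) (ha0 : a 0 = 0) (n : ℕ) :
    mwalk (fun _ => 0) a (2 * n) 0
      = mwalk (fun k => a (2 * k) + a (2 * k + 1)) (fun k => a (2 * k - 1) * a (2 * k)) n 0 := by
  have := stmt6_key a ha0 n 0
  simpa using this.symm
end

section
/- Define E_{n,k} and O_{n,k} (polynomials in X and Y) by the recursions E_{n,k} = O_{n-1,k-1} + (n-1+X) E_{n-1,k} and O_{n,k} = E_{n,k} + (n-1+Y) O_{n-1,k}, with E_{n,k} = O_{n,k} = 0 if n < k, k < 0, or n < 0, and E_{n,n} = O_{n,n} = 1. Then E_{n,k} equals the sum over all k-marked permutations pi of {1,...,n} of X^{RLmin'(pi)} Y^{LRmin'(pi)}. -/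
open Finset

/-- `markedOK σ S k` says that `(σ, S)` is a `k`-marked permutation of `[n]`: the positions
in `S` (of size `k`) carry values forming an increasing subsequence of the word
`σ 0, σ 1, …, σ (n-1)`. -/
def markedOK {n : ℕ} (σ : Equiv.Perm (Fin n)) (S : Finset (Fin n)) (k : ℕ) : Prop :=
  S.card = k ∧ ∀ i ∈ S, ∀ j ∈ S, i < j → σ i < σ j

/-- `RLmin'`: the number of unmarked positions `p` whose entry is a right-to-left minimum of
its block (the maximal run of unmarked positions containing `p`) and whose value lies between
the neighboring marked values (`a_i ≤ σ p ≤ a_{i+1}`, with `a_0 = 0`, `a_{k+1} = ∞`). -/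
def rlmin' {n : ℕ} (σ : Equiv.Perm (Fin n)) (S : Finset (Fin n)) : ℕ :=
  (univ.filter fun p => p ∉ S ∧ (∀ s ∈ S, s < p → σ s < σ p) ∧ (∀ s ∈ S, p < s → σ p < σ s) ∧
    ∀ q, p < q → q ∉ S → (∀ r, p < r → r < q → r ∉ S) → σ p < σ q).card

/-- `LRmin'`: the number of left-to-right minima of the whole word which are unmarked and
occur strictly after the first marked position (i.e. not left-to-right minima of the initial
block `w₀` and not marked). -/
def lrmin' {n : ℕ} (σ : Equiv.Perm (Fin n)) (S : Finset (Fin n)) : ℕ :=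
  (univ.filter fun p => p ∉ S ∧ (∃ s ∈ S, s < p) ∧ ∀ q, q < p → σ p < σ q).card


/-!
`E n k` is identified with the generating function of `k`-marked permutations of `[n]`, and
`O n k` with that of `(k+1)`-marked permutations of `[n+1]` whose maximum `n+1` is marked.
For `E`, remove the maximum: if it is unmarked it may sit at any of the `n+1` positions, and it
counts in `RLmin'` exactly when it is the last entry (factor `n + X`); if it is marked we are in
the situation of `O`. For `O`, remove the last entry: if it is marked it is the maximum, which
leaves a `k`-marked permutation (`E`); otherwise it lies after the marked maximum, so it never
counts in `RLmin'`, and it counts in `LRmin'` exactly when it is the value `1` (factor `n + Y`).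
-/

open Equiv

namespace Equiv.Perm

variable {m : ℕ}

def insertAt (j v : Fin (m + 1)) (π : Perm (Fin m)) : Perm (Fin (m + 1)) :=
  ((finSuccEquiv' j).trans π.optionCongr).trans (finSuccEquiv' v).symm

@[simp] lemma insertAt_apply_self (j v : Fin (m + 1)) (π : Perm (Fin m)) :
    insertAt j v π j = v := by
  simp [insertAt]

@[simp] lemma insertAt_apply_succAbove (j v : Fin (m + 1)) (π : Perm (Fin m)) (i : Fin m) :
    insertAt j v π (j.succAbove i) = v.succAbove (π i) := by
  simp [insertAt]

@[simp] lemma insertAt_symm_apply_self (j v : Fin (m + 1)) (π : Perm (Fin m)) :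
    (insertAt j v π).symm v = j := by
  rw [symm_apply_eq, insertAt_apply_self]

@[simp] lemma insertAt_last_apply_castSucc (v : Fin (m + 1)) (π : Perm (Fin m)) (i : Fin m) :
    insertAt (Fin.last m) v π i.castSucc = v.succAbove (π i) := by
  rw [← Fin.succAbove_last_apply, insertAt_apply_succAbove]

lemma eq_of_insertAt_eq {j v v' : Fin (m + 1)} {π π' : Perm (Fin m)}
    (h : insertAt j v π = insertAt j v' π') : π = π' := by
  obtain rfl : v = v' := by simpa using congrArg (· j) h
  exact Equiv.ext fun i => j.succAbove_right_injective
    (by simpa using congrArg (· (j.succAbove i)) h)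

lemma bijective_insertAt_pos (v : Fin (m + 1)) :
    Function.Bijective fun x : Fin (m + 1) × Perm (Fin m) => insertAt x.1 v x.2 := by
  refine (Fintype.bijective_iff_injective_and_card _).2 ⟨?_, ?_⟩
  · rintro ⟨j, π⟩ ⟨j', π'⟩ h
    obtain rfl : j = j' := by simpa using congrArg (fun σ : Perm _ => σ.symm v) h
    exact Prod.ext rfl (eq_of_insertAt_eq h)
  · simp [Fintype.card_perm, Nat.factorial_succ]

lemma bijective_insertAt_val (j : Fin (m + 1)) :
    Function.Bijective fun x : Fin (m + 1) × Perm (Fin m) => insertAt j x.1 x.2 := by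
  refine (Fintype.bijective_iff_injective_and_card _).2 ⟨?_, ?_⟩
  · rintro ⟨v, π⟩ ⟨v', π'⟩ h
    exact Prod.ext (by simpa using congrArg (· j) h) (eq_of_insertAt_eq h)
  · simp [Fintype.card_perm, Nat.factorial_succ]

lemma sum_eq_sum_insertAt_pos {M : Type*} [AddCommMonoid M] (v : Fin (m + 1))
    (f : Perm (Fin (m + 1)) → M) : ∑ σ, f σ = ∑ j, ∑ π, f (insertAt j v π) := by
  rw [← Fintype.sum_prod_type', (bijective_insertAt_pos v).sum_comp f]

lemma sum_eq_sum_insertAt_val {M : Type*} [AddCommMonoid M] (j : Fin (m + 1))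
    (f : Perm (Fin (m + 1)) → M) : ∑ σ, f σ = ∑ v, ∑ π, f (insertAt j v π) := by
  rw [← Fintype.sum_prod_type', (bijective_insertAt_val j).sum_comp f]

end Equiv.Perm

namespace Fin

variable {m : ℕ}

lemma sum_finset_succAbove {M : Type*} [AddCommMonoid M] (j : Fin (m + 1))
    (f : Finset (Fin (m + 1)) → M) :
    ∑ T, f T = ∑ S : Finset (Fin m),
      (f (S.map j.succAboveEmb) + f (insert j (S.map j.succAboveEmb))) := by
  rw [← powerset_univ, univ_succAbove m j, cons_eq_insert, sum_powerset_insert (by simp),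
    map_eq_image, powerset_image, sum_image, sum_image, ← sum_add_distrib, powerset_univ]
  · simp [map_eq_image]
  all_goals exact (image_injective j.succAboveEmb.injective).injOn

lemma card_filter_succAbove (j : Fin (m + 1)) (P : Fin (m + 1) → Prop) [DecidablePred P] :
    #{i | P i} = #{i : Fin m | P (j.succAbove i)} + if P j then 1 else 0 := by
  rw [card_filter, card_filter, sum_univ_succAbove _ j, add_comm]

lemma sum_pow_ite_eq {R : Type*} [Semiring R] (X : R) (a : Fin (m + 1)) :
    ∑ j : Fin (m + 1), X ^ (if j = a then 1 else 0) = m + X := by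
  simp [sum_univ_succAbove _ a, succAbove_ne, add_comm]

end Fin

open Equiv.Perm

section Statistics

variable {n : ℕ}

abbrev IsRLMin' (σ : Perm (Fin n)) (S : Finset (Fin n)) (p : Fin n) : Prop :=
  p ∉ S ∧ (∀ s ∈ S, s < p → σ s < σ p) ∧ (∀ s ∈ S, p < s → σ p < σ s) ∧
    ∀ q, p < q → q ∉ S → (∀ r, p < r → r < q → r ∉ S) → σ p < σ q

abbrev IsLRMin' (σ : Perm (Fin n)) (S : Finset (Fin n)) (p : Fin n) : Prop :=
  p ∉ S ∧ (∃ s ∈ S, s < p) ∧ ∀ q, q < p → σ p < σ q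

lemma rlmin'_eq_card (σ : Perm (Fin n)) (S : Finset (Fin n)) :
    rlmin' σ S = #{p | IsRLMin' σ S p} := rfl

lemma lrmin'_eq_card (σ : Perm (Fin n)) (S : Finset (Fin n)) :
    lrmin' σ S = #{p | IsLRMin' σ S p} := rfl

lemma IsRLMin'.apply_lt_apply_of_covBy {σ : Perm (Fin n)} {S : Finset (Fin n)} {p q : Fin n}
    (h : IsRLMin' σ S p) (hpq : p ⋖ q) : σ p < σ q := by
  by_cases hq : q ∈ S
  · exact h.2.2.1 q hq hpq.1
  · exact h.2.2.2 q hpq.1 hq fun r hpr hrq => (hpq.2 hpr hrq).elim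

lemma IsRLMin'.lt_of_mem_of_apply_eq_last {m : ℕ} {σ : Perm (Fin (m + 1))}
    {S : Finset (Fin (m + 1))} {p s : Fin (m + 1)} (h : IsRLMin' σ S p) (hs : s ∈ S)
    (hσs : σ s = Fin.last m) : p < s := by
  rcases lt_trichotomy s p with hsp | rfl | hps
  · exact absurd (h.2.1 s hs hsp) (hσs ▸ not_lt.2 (Fin.le_last _))
  · exact absurd hs h.1
  · exact hps

lemma not_isLRMin'_of_apply_eq_last {m : ℕ} {σ : Perm (Fin (m + 1))} {S : Finset (Fin (m + 1))}
    {p : Fin (m + 1)} (hσp : σ p = Fin.last m) : ¬ IsLRMin' σ S p := by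
  rintro ⟨-, ⟨s, -, hsp⟩, hmin⟩
  exact absurd (hmin s hsp) (hσp ▸ not_lt.2 (Fin.le_last _))

end Statistics

variable {m : ℕ}

section InsertUnmarkedMax

variable (j : Fin (m + 1)) (π : Perm (Fin m)) (S : Finset (Fin m))

lemma isRLMin'_insertAt_last_map_self :
    IsRLMin' (insertAt j (Fin.last m) π) (S.map j.succAboveEmb) j ↔ j = Fin.last m := by
  constructor
  · intro h
    by_contra hj
    obtain ⟨i, rfl⟩ := Fin.exists_castSucc_eq.2 hj
    have hcov : i.castSucc ⋖ i.succ := by simp [CovBy, Fin.lt_def]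
    have := h.apply_lt_apply_of_covBy hcov
    rw [← Fin.succAbove_castSucc_self, insertAt_apply_succAbove, insertAt_apply_self] at this
    exact not_lt.2 (Fin.le_last _) this
  · rintro rfl
    simp [IsRLMin', Fin.castSucc_lt_last, not_lt.2 (Fin.le_last _)]

lemma rlmin'_insertAt_last_map :
    rlmin' (insertAt j (Fin.last m) π) (S.map j.succAboveEmb) =
      rlmin' π S + if j = Fin.last m then 1 else 0 := by
  rw [rlmin'_eq_card, Fin.card_filter_succAbove j]
  simp only [isRLMin'_insertAt_last_map_self]
  congr 2
  ext q
  simp [IsRLMin', Fin.forall_iff_succAbove j, Fin.succAbove_lt_succAbove_iff,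
    Fin.lt_last_iff_ne_last, Fin.succAbove_ne]

lemma lrmin'_insertAt_last_map :
    lrmin' (insertAt j (Fin.last m) π) (S.map j.succAboveEmb) = lrmin' π S := by
  rw [lrmin'_eq_card, Fin.card_filter_succAbove j,
    if_neg (not_isLRMin'_of_apply_eq_last (insertAt_apply_self _ _ _)), add_zero]
  congr 1
  ext q
  simp [IsLRMin', Fin.forall_iff_succAbove j, Fin.exists_iff_succAbove j,
    Fin.succAbove_lt_succAbove_iff, Fin.lt_last_iff_ne_last, Fin.succAbove_ne]

end InsertUnmarkedMax

section AppendMarkedMax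

variable (π : Perm (Fin m)) (S : Finset (Fin m))

lemma rlmin'_insertAt_last_last_insert :
    rlmin' (insertAt (Fin.last m) (Fin.last m) π)
      (insert (Fin.last m) (S.map (Fin.last m).succAboveEmb)) = rlmin' π S := by
  rw [rlmin'_eq_card, Fin.card_filter_succAbove (Fin.last m)]
  simp [IsRLMin', Fin.forall_iff_castSucc (n := m), Fin.castSucc_lt_last,
    not_lt.2 (Fin.le_last _), rlmin'_eq_card]

lemma lrmin'_insertAt_last_last_insert :
    lrmin' (insertAt (Fin.last m) (Fin.last m) π)
      (insert (Fin.last m) (S.map (Fin.last m).succAboveEmb)) = lrmin' π S := by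
  rw [lrmin'_eq_card, Fin.card_filter_succAbove (Fin.last m)]
  simp [IsLRMin', Fin.forall_iff_castSucc (n := m), Fin.exists_iff_castSucc (n := m),
    Fin.castSucc_lt_last, not_lt.2 (Fin.le_last _), lrmin'_eq_card]

end AppendMarkedMax

section AppendUnmarked

variable (c : Fin (m + 1)) (π : Perm (Fin (m + 1))) {S : Finset (Fin (m + 1))}

lemma insertAt_last_castSucc_symm_last :
    (insertAt (Fin.last (m + 1)) c.castSucc π).symm (Fin.last (m + 1)) =
      (π.symm (Fin.last m)).castSucc := by
  rw [symm_apply_eq, insertAt_last_apply_castSucc, apply_symm_apply,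
    Fin.succAbove_of_le_castSucc _ _ (Fin.castSucc_le_castSucc_iff.2 (Fin.le_last c)),
    Fin.succ_last]

lemma rlmin'_insertAt_last_castSucc_map (hmax : π.symm (Fin.last m) ∈ S) :
    rlmin' (insertAt (Fin.last (m + 1)) c.castSucc π)
      (S.map (Fin.last (m + 1)).succAboveEmb) = rlmin' π S := by
  have hlast : ¬ IsRLMin' (insertAt (Fin.last (m + 1)) c.castSucc π)
      (S.map (Fin.last (m + 1)).succAboveEmb) (Fin.last (m + 1)) := fun h =>
    not_lt.2 (Fin.le_last _) <| h.lt_of_mem_of_apply_eq_last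
      (s := (π.symm (Fin.last m)).castSucc) (by simpa using hmax)
      (by rw [← insertAt_last_castSucc_symm_last c, apply_symm_apply])
  rw [rlmin'_eq_card, Fin.card_filter_succAbove (Fin.last (m + 1)), if_neg hlast, add_zero,
    rlmin'_eq_card]
  congr 1
  ext q
  simp [IsRLMin', Fin.forall_iff_castSucc (n := m + 1), Fin.castSucc_lt_last,
    not_lt.2 (Fin.le_last _)]
  -- an RL-min lies before the marked maximum, so its block never reaches the appended entry
  exact fun h₁ h₂ h₃ h₄ hblock => absurd hmax <| hblock _
    (IsRLMin'.lt_of_mem_of_apply_eq_last ⟨h₁, h₂, h₃, h₄⟩ hmax (apply_symm_apply _ _))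

lemma lrmin'_insertAt_last_castSucc_map (hmax : π.symm (Fin.last m) ∈ S) :
    lrmin' (insertAt (Fin.last (m + 1)) c.castSucc π)
      (S.map (Fin.last (m + 1)).succAboveEmb) = lrmin' π S + if c = 0 then 1 else 0 := by
  rw [lrmin'_eq_card, Fin.card_filter_succAbove (Fin.last (m + 1)), lrmin'_eq_card]
  congr 1
  · congr 1
    ext q
    simp [IsLRMin', Fin.forall_iff_castSucc (n := m + 1), Fin.exists_iff_castSucc (n := m + 1),
      not_lt.2 (Fin.le_last _)]
  · have hmin : (∀ i, c ≤ π i) ↔ c = 0 :=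
      ⟨fun h => Fin.le_zero_iff.1 (by simpa using h (π.symm 0)), fun h i => h ▸ Fin.zero_le _⟩
    simp [IsLRMin', Fin.forall_iff_castSucc (n := m + 1), Fin.exists_iff_castSucc (n := m + 1),
      Fin.castSucc_lt_last, Fin.lt_succAbove_iff_le_castSucc, hmin,
      show ∃ i, i ∈ S from ⟨_, hmax⟩]

end AppendUnmarked

lemma markedOK_insertAt_map (j v : Fin (m + 1)) (π : Perm (Fin m)) (S : Finset (Fin m))
    (k : ℕ) : markedOK (insertAt j v π) (S.map j.succAboveEmb) k ↔ markedOK π S k := by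
  simp [markedOK, Fin.succAbove_lt_succAbove_iff]

lemma markedOK_insertAt_last_last_insert (π : Perm (Fin m)) (S : Finset (Fin m)) (k : ℕ) :
    markedOK (insertAt (Fin.last m) (Fin.last m) π)
      (insert (Fin.last m) (S.map (Fin.last m).succAboveEmb)) (k + 1) ↔ markedOK π S k := by
  simp [markedOK, Finset.card_insert_of_notMem, Fin.castSucc_lt_last, not_lt.2 (Fin.le_last _)]

lemma apply_last_eq_last_of_markedOK {σ : Perm (Fin (m + 1))} {T : Finset (Fin (m + 1))} {k : ℕ}
    (hσ : markedOK σ T k) (hmax : σ.symm (Fin.last m) ∈ T) (hlast : Fin.last m ∈ T) :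
    σ (Fin.last m) = Fin.last m := by
  by_contra hne
  have hlt : σ.symm (Fin.last m) < Fin.last m :=
    Fin.lt_last_iff_ne_last.2 fun h => hne ((symm_apply_eq σ).1 h).symm
  exact absurd (hσ.2 _ hmax _ hlast hlt) (by simp [Fin.le_last])

section GeneratingFunctions

open Classical

variable {R : Type} [CommRing R] (X Y : R)

noncomputable def markedWeight {n : ℕ} (σ : Perm (Fin n)) (S : Finset (Fin n)) : R :=
  X ^ rlmin' σ S * Y ^ lrmin' σ S

noncomputable def markedGF (n k : ℕ) : R :=
  ∑ σ : Perm (Fin n), ∑ S, if markedOK σ S k then markedWeight X Y σ S else 0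

noncomputable def markedMaxGF (n k : ℕ) : R :=
  ∑ σ : Perm (Fin (n + 1)), ∑ S,
    if markedOK σ S (k + 1) ∧ σ.symm (Fin.last n) ∈ S then markedWeight X Y σ S else 0

lemma sum_unmarked_max (n k : ℕ) :
    ∑ σ : Perm (Fin (n + 1)), ∑ T,
      (if markedOK σ T k ∧ σ.symm (Fin.last n) ∉ T then markedWeight X Y σ T else 0) =
      (n + X) * markedGF X Y n k := by
  rw [sum_eq_sum_insertAt_pos (Fin.last n), ← Fin.sum_pow_ite_eq X (Fin.last n), Finset.sum_mul]
  refine Finset.sum_congr rfl fun j _ => ?_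
  rw [markedGF, Finset.mul_sum]
  refine Finset.sum_congr rfl fun π _ => ?_
  rw [Fin.sum_finset_succAbove j, Finset.mul_sum]
  refine Finset.sum_congr rfl fun S _ => ?_
  simp [markedOK_insertAt_map, markedWeight, rlmin'_insertAt_last_map, lrmin'_insertAt_last_map,
    pow_add]
  split_ifs <;> ring

lemma markedGF_succ_succ (n k : ℕ) :
    markedGF X Y (n + 1) (k + 1) = markedMaxGF X Y n k + (n + X) * markedGF X Y n (k + 1) := by
  rw [← sum_unmarked_max, markedGF, markedMaxGF, ← Finset.sum_add_distrib]
  refine Finset.sum_congr rfl fun σ _ => ?_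
  rw [← Finset.sum_add_distrib]
  refine Finset.sum_congr rfl fun T _ => ?_
  by_cases h : σ.symm (Fin.last n) ∈ T <;> simp [h]

lemma markedGF_succ_zero (n : ℕ) : markedGF X Y (n + 1) 0 = (n + X) * markedGF X Y n 0 := by
  rw [← sum_unmarked_max, markedGF]
  refine Finset.sum_congr rfl fun σ _ => Finset.sum_congr rfl fun T _ => ?_
  by_cases h : markedOK σ T 0
  · simp [Finset.card_eq_zero.1 h.1]
  · simp [h]

lemma markedMaxGF_succ (n k : ℕ) :
    markedMaxGF X Y (n + 1) k = markedGF X Y (n + 1) k + (n + Y) * markedMaxGF X Y n k := by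
  rw [markedMaxGF, sum_eq_sum_insertAt_val (Fin.last (n + 1)), Fin.sum_univ_castSucc, add_comm,
    ← Fin.sum_pow_ite_eq Y 0, Finset.sum_mul]
  congr 1
  · rw [markedGF]
    refine Finset.sum_congr rfl fun π _ => ?_
    rw [Fin.sum_finset_succAbove (Fin.last (n + 1))]
    refine Finset.sum_congr rfl fun S _ => ?_
    simp [markedOK_insertAt_last_last_insert, markedWeight, rlmin'_insertAt_last_last_insert,
      lrmin'_insertAt_last_last_insert]
  · refine Finset.sum_congr rfl fun c _ => ?_
    rw [markedMaxGF, Finset.mul_sum]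
    refine Finset.sum_congr rfl fun π _ => ?_
    rw [Fin.sum_finset_succAbove (Fin.last (n + 1)), Finset.mul_sum]
    refine Finset.sum_congr rfl fun S _ => ?_
    by_cases hmax : π.symm (Fin.last n) ∈ S
    · have hlast : ¬ markedOK (insertAt (Fin.last (n + 1)) c.castSucc π)
          (insert (Fin.last (n + 1)) (S.map (Fin.last (n + 1)).succAboveEmb)) (k + 1) :=
        fun h => Fin.castSucc_ne_last c <| by
          simpa using apply_last_eq_last_of_markedOK h
            (by simp [insertAt_last_castSucc_symm_last, hmax]) (Finset.mem_insert_self _ _)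
      simp [hmax, hlast, markedOK_insertAt_map, markedWeight, insertAt_last_castSucc_symm_last,
        rlmin'_insertAt_last_castSucc_map c π hmax, lrmin'_insertAt_last_castSucc_map c π hmax,
        pow_add]
      split_ifs <;> ring
    · simp [hmax, insertAt_last_castSucc_symm_last]

lemma markedGF_eq_zero {n k : ℕ} (h : n < k) : markedGF X Y n k = 0 :=
  Finset.sum_eq_zero fun σ _ => Finset.sum_eq_zero fun S _ =>
    if_neg fun hS => (Finset.card_le_univ S).not_gt (by simpa [hS.1] using h)

lemma markedMaxGF_eq_zero {n k : ℕ} (h : n < k) : markedMaxGF X Y n k = 0 :=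
  Finset.sum_eq_zero fun σ _ => Finset.sum_eq_zero fun S _ =>
    if_neg fun hS => (Finset.card_le_univ S).not_gt (by simpa [hS.1.1] using h)

lemma markedGF_zero_zero : markedGF X Y 0 0 = 1 := by
  simp [markedGF, markedOK, markedWeight, rlmin', lrmin', Finset.eq_empty_of_isEmpty]

lemma markedMaxGF_zero_zero : markedMaxGF X Y 0 0 = 1 := by
  have huniv : (Finset.univ : Finset (Finset (Fin 1))) = {∅, {0}} := by decide
  simp [markedMaxGF, huniv, markedOK, markedWeight, rlmin', lrmin',
    Subsingleton.elim _ (0 : Fin 1)]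

end GeneratingFunctions

open Classical in
/-- Proposition 2.6 (the `E` part): `E_{n,k}` is the generating function
`∑ X^{RLmin'(π)} Y^{LRmin'(π)}` over all `k`-marked permutations `π` of `[n]`. -/
theorem stmt11 {R : Type} [CommRing R] (X Y : R) (E O : ℕ → ℕ → R)
    (hE0 : ∀ n k, n < k → E n k = 0) (hO0 : ∀ n k, n < k → O n k = 0)
    (hEd : ∀ n, E n n = 1) (hOd : ∀ n, O n n = 1)
    (hErec0 : ∀ n, E (n + 1) 0 = ((n : R) + X) * E n 0)
    (hErec : ∀ n k, E (n + 1) (k + 1) = O n k + ((n : R) + X) * E n (k + 1))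
    (hOrec : ∀ n k, O (n + 1) k = E (n + 1) k + ((n : R) + Y) * O n k)
    (n k : ℕ) :
    E n k = ∑ σ : Equiv.Perm (Fin n),
      ∑ S ∈ univ.filter (fun S : Finset (Fin n) => markedOK σ S k),
        X ^ rlmin' σ S * Y ^ lrmin' σ S := by
  have key : ∀ n, (∀ k, E n k = markedGF X Y n k) ∧ ∀ k, O n k = markedMaxGF X Y n k := by
    intro n
    induction n with
    | zero =>
      refine ⟨fun k => ?_, fun k => ?_⟩ <;> rcases k with _ | k
      · rw [hEd, markedGF_zero_zero]
      · rw [hE0 _ _ k.succ_pos, markedGF_eq_zero X Y k.succ_pos]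
      · rw [hOd, markedMaxGF_zero_zero]
      · rw [hO0 _ _ k.succ_pos, markedMaxGF_eq_zero X Y k.succ_pos]
    | succ n ih =>
      have hE : ∀ k, E (n + 1) k = markedGF X Y (n + 1) k := by
        rintro (_ | k)
        · rw [hErec0, ih.1, markedGF_succ_zero]
        · rw [hErec, ih.1, ih.2, markedGF_succ_succ]
      exact ⟨hE, fun k => by rw [hOrec, hE, ih.2, markedMaxGF_succ]⟩
  rw [(key n).1 k, markedGF]
  simp_rw [Finset.sum_filter]
  rfl
end

section
/- Let theta_n(X,Y) be the moments for b_k = 2k+X+Y and lambda_k = (k+X)(k-1+Y). Setting X = Y = 1 yields theta_n(1,1) = (n+1)! for all n >= 0. -/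
lemma mwalk_closed (n h : ℕ) :
    mwalk (fun k => 2 * (k : ℚ) + 1 + 1)
      (fun k => ((k : ℚ) + 1) * ((k : ℚ) - 1 + 1)) n h
      = ((n + 1).factorial : ℚ) * ∏ i ∈ Finset.range h, ((n : ℚ) - i) := by
  induction n generalizing h with
  | zero =>
    cases h with
    | zero => simp [mwalk]
    | succ h =>
      rw [mwalk, Finset.prod_range_succ']
      simp
  | succ n ih =>
    cases h with
    | zero =>
      rw [mwalk, ih, ih]
      simp only [Finset.prod_range_one, Finset.prod_range_zero, Nat.factorial_succ]
      push_cast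
      ring
    | succ h =>
      rw [mwalk, ih, ih, ih]
      have key : ∀ i ∈ Finset.range h, ((n : ℚ) + 1 - ((i : ℚ) + 1)) = (n : ℚ) - i :=
        fun i _ => by ring
      have e1 : ∏ i ∈ Finset.range (h + 1), ((n : ℚ) + 1 - i)
          = ((n : ℚ) + 1) * ∏ i ∈ Finset.range h, ((n : ℚ) - i) := by
        rw [Finset.prod_range_succ']
        push_cast
        rw [Finset.prod_congr rfl key]
        ring
      push_cast
      rw [e1]
      simp only [Finset.prod_range_succ]
      rw [Nat.factorial_succ (n + 1)]
      push_cast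
      ring

/-- The moments `θ_n(X,Y)` for `b_k = 2k+X+Y`, `λ_k = (k+X)(k-1+Y)`, specialized at
`X = Y = 1`, equal `(n+1)!`. -/
theorem stmt15 (n : ℕ) :
    mwalk (fun k => 2 * (k : ℚ) + 1 + 1)
      (fun k => ((k : ℚ) + 1) * ((k : ℚ) - 1 + 1)) n 0 = ((n + 1).factorial : ℚ) := by
  simpa using mwalk_closed n 0
end

section
/- Define L_n(x; X, Y) by L_{n+1} = (x - (2n+X+Y)) L_n - (n+X)(n+Y-1) L_{n-1}, L_0 = 1, L_{-1} = 0, and let the linear functional calL on polynomials be given by calL(x^n) = theta_n(X,Y), where theta_n are the moments satisfying sum_{k=0}^J theta_k (Y-1)_{J-k}(X)_{J-k}/(J-k)! = (Y)_J (X+1)_J / J! for all J >= 0. Then calL(x^s L_n(x; X, Y)) = 0 for all integers 0 <= s <= n-1. -/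
/-- The field `ℚ(X,Y)` of rational functions in two indeterminates. -/
noncomputable abbrev KF : Type := RatFunc (RatFunc ℚ)

/-- The indeterminate `X`. -/
noncomputable def Xv : KF := RatFunc.C RatFunc.X

/-- The indeterminate `Y`. -/
noncomputable def Yv : KF := RatFunc.X

namespace Aux16

instance ratfunc_charZero (K : Type*) [Field K] [CharZero K] : CharZero (RatFunc K) :=
  charZero_of_injective_algebraMap (RatFunc.algebraMap_injective K)

example : CharZero KF := inferInstance

lemma rf_zero (a : KF) : rf a 0 = 1 := Finset.prod_range_zero _

lemma rf_succ (a : KF) (j : ℕ) : rf a (j+1) = rf a j * (a + j) := Finset.prod_range_succ _ _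

lemma rf_succ' (a : KF) (j : ℕ) : rf a (j+1) = a * rf (a+1) j := by
  rw [rf, Finset.prod_range_succ', rf, mul_comm]
  congr 1
  · norm_num
  · apply Finset.prod_congr rfl
    intro i _
    push_cast
    ring

lemma fact_ne (J : ℕ) : ((J.factorial : KF)) ≠ 0 :=
  Nat.cast_ne_zero.mpr (Nat.factorial_ne_zero J)

end Aux16

namespace Aux16

lemma contig (a b : KF) (J : ℕ) :
    rf a (J+1) * rf b (J+1) / (((J+1).factorial : ℕ) : KF)
      = (a-1) * rf a J * ((b-1) * rf b J) / (((J+1).factorial : ℕ) : KF)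
        + (a+b-1) * (rf a J * rf b J / ((J.factorial : ℕ) : KF))
        + a * b * (if J = 0 then 0
            else rf (a+1) (J-1) * rf (b+1) (J-1) / (((J-1).factorial : ℕ) : KF)) := by
  cases J with
  | zero =>
      simp [rf_succ, rf_zero]
      ring
  | succ J' =>
      simp only [Nat.succ_ne_zero, if_false, Nat.add_sub_cancel]
      rw [show J' + 1 + 1 = J' + 2 from rfl]
      rw [rf_succ a (J'+1), rf_succ b (J'+1), rf_succ' a J', rf_succ' b J']
      have hf1 : (((J'+1).factorial : ℕ) : KF)
          = ((J':KF)+1) * ((J'.factorial : ℕ) : KF) := by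
        rw [Nat.factorial_succ]; push_cast; ring
      have hf2 : (((J'+2).factorial : ℕ) : KF)
          = (((J':KF)+2) * ((J':KF)+1)) * ((J'.factorial : ℕ) : KF) := by
        rw [show J'+2 = J'+1+1 from rfl, Nat.factorial_succ, Nat.factorial_succ]
        push_cast; ring
      rw [hf2, hf1]
      have h0 : ((J'.factorial : ℕ) : KF) ≠ 0 := fact_ne J'
      have h2 : ((J':KF)+1) ≠ 0 := by
        have := Nat.cast_ne_zero (R := KF).mpr (Nat.succ_ne_zero J')
        push_cast at this; exact this
      have h3 : ((J':KF)+2) ≠ 0 := by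
        have := Nat.cast_ne_zero (R := KF).mpr (Nat.succ_ne_zero (J'+1))
        push_cast at this
        convert this using 1; ring
      have hd2 : (((J':KF)+2) * ((J':KF)+1)) * ((J'.factorial : ℕ) : KF) ≠ 0 :=
        mul_ne_zero (mul_ne_zero h3 h2) h0
      have hd1 : ((J':KF)+1) * ((J'.factorial : ℕ) : KF) ≠ 0 := mul_ne_zero h2 h0
      rw [← mul_div_assoc, ← mul_div_assoc]
      rw [div_add_div _ _ hd2 hd1, div_add_div _ _ (mul_ne_zero hd2 hd1) h0,
        div_eq_div_iff hd2 (mul_ne_zero (mul_ne_zero hd2 hd1) h0)]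
      push_cast
      ring

end Aux16

namespace Aux16

noncomputable def f (m J : ℕ) : KF :=
  rf (Yv - 1 + m) J * rf (Xv + m) J / ((J.factorial : ℕ) : KF)

lemma rf_congr {a a' : KF} (h : a = a') (J : ℕ) : rf a J = rf a' J := by rw [h]

lemma f_zero (m : ℕ) : f m 0 = 1 := by simp [f, rf_zero]

lemma contig_f (m J : ℕ) :
    f (m+1) (J+1) = f m (J+1) + (2*(m:KF) + Xv + Yv) * f (m+1) J
      + (((m:KF)+1+Xv) * ((m:KF)+Yv)) * (if J = 0 then 0 else f (m+2) (J-1)) := by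
  have H := contig (Yv - 1 + (↑(m+1):KF)) (Xv + (↑(m+1):KF)) J
  simp only [f]
  rw [rf_congr (show (Yv - 1 + (↑m:KF)) = Yv - 1 + ↑(m+1) - 1 by push_cast; ring) (J+1),
      rf_congr (show (Xv + (↑m:KF)) = Xv + ↑(m+1) - 1 by push_cast; ring) (J+1),
      rf_succ' (Yv - 1 + (↑(m+1):KF) - 1) J, rf_succ' (Xv + (↑(m+1):KF) - 1) J,
      rf_congr (show Yv - 1 + (↑(m+1):KF) - 1 + 1 = Yv - 1 + ↑(m+1) by ring) J,
      rf_congr (show Xv + (↑(m+1):KF) - 1 + 1 = Xv + ↑(m+1) by ring) J,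
      rf_congr (show (Yv - 1 + (↑(m+2):KF)) = Yv - 1 + ↑(m+1) + 1 by push_cast; ring) (J-1),
      rf_congr (show (Xv + (↑(m+2):KF)) = Xv + ↑(m+1) + 1 by push_cast; ring) (J-1)]
  rw [H]
  push_cast
  ring

end Aux16

namespace Aux16

noncomputable def mu : ℕ → ℕ → KF
  | 0, k => if k = 0 then 1 else 0
  | (j+1), k =>
      (match k with
       | 0 => 0
       | (k'+1) => mu j k')
      + (2*(k:KF) + Xv + Yv) * mu j k
      + (((k:KF)+1+Xv) * ((k:KF)+Yv)) * mu j (k+1)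

lemma mu_zero (k : ℕ) : mu 0 k = if k = 0 then 1 else 0 := rfl

lemma mu_succ0 (j : ℕ) :
    mu (j+1) 0 = (Xv + Yv) * mu j 0 + ((1+Xv) * Yv) * mu j 1 := by
  show (0:KF) + (2*((0:ℕ):KF) + Xv + Yv) * mu j 0
      + ((((0:ℕ):KF)+1+Xv) * (((0:ℕ):KF)+Yv)) * mu j 1 = _
  push_cast
  ring

lemma mu_succ (j k : ℕ) :
    mu (j+1) (k+1) = mu j k + (2*((k:KF)+1) + Xv + Yv) * mu j (k+1)
      + (((k:KF)+2+Xv) * ((k:KF)+1+Yv)) * mu j (k+2) := by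
  show mu j k + (2*((↑(k+1)):KF) + Xv + Yv) * mu j (k+1)
      + (((↑(k+1):KF)+1+Xv) * ((↑(k+1):KF)+Yv)) * mu j (k+2) = _
  push_cast
  ring

lemma mu_vanish : ∀ j k, j < k → mu j k = 0 := by
  intro j
  induction j with
  | zero => intro k hk; simp [mu_zero]; omega
  | succ j ih =>
      intro k hk
      match k, hk with
      | (k'+1), hk =>
        rw [mu_succ]
        rw [ih k' (by omega), ih (k'+1) (by omega), ih (k'+2) (by omega)]
        ring

end Aux16

namespace Aux16

lemma Skey : ∀ j k, (∑ i ∈ Finset.range (j+1), mu i k * f 0 (j - i))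
    = if k ≤ j then f (k+1) (j-k) else 0 := by
  intro j
  induction j with
  | zero =>
      intro k
      rw [Finset.sum_range_one, Nat.zero_sub, f_zero, mu_zero]
      by_cases hk : k = 0
      · subst hk; rw [if_pos rfl, if_pos (le_refl 0), Nat.sub_zero, f_zero, mul_one]
      · rw [if_neg hk, if_neg (show ¬ k ≤ 0 by omega), zero_mul]
  | succ j ih =>
      intro k
      rw [Finset.sum_range_succ']
      simp only [Nat.succ_sub_succ, Nat.sub_zero]
      cases k with
      | zero =>
          rw [mu_zero, if_pos rfl, one_mul]
          have e1 : ∀ i ∈ Finset.range (j+1), mu (i+1) 0 * f 0 (j - i)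
              = (Xv+Yv) * (mu i 0 * f 0 (j-i)) + ((1+Xv)*Yv) * (mu i 1 * f 0 (j-i)) := by
            intro i _
            rw [mu_succ0]
            ring
          rw [Finset.sum_congr rfl e1, Finset.sum_add_distrib, ← Finset.mul_sum,
            ← Finset.mul_sum, ih 0, ih 1]
          rw [if_pos (Nat.zero_le _), if_pos (Nat.zero_le _), Nat.sub_zero, Nat.sub_zero]
          rw [contig_f 0 j]
          by_cases hj : j = 0
          · rw [if_neg (show ¬ 1 ≤ j by omega), if_pos hj]
            push_cast; ring
          · rw [if_pos (show 1 ≤ j by omega), if_neg hj]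
            push_cast; ring
      | succ k' =>
          rw [mu_zero, if_neg (Nat.succ_ne_zero k'), zero_mul, add_zero]
          have e1 : ∀ i ∈ Finset.range (j+1), mu (i+1) (k'+1) * f 0 (j - i)
              = (mu i k' * f 0 (j-i))
                + (2*((k':KF)+1) + Xv + Yv) * (mu i (k'+1) * f 0 (j-i))
                + (((k':KF)+2+Xv) * ((k':KF)+1+Yv)) * (mu i (k'+2) * f 0 (j-i)) := by
            intro i _
            rw [mu_succ]
            ring
          rw [Finset.sum_congr rfl e1, Finset.sum_add_distrib, Finset.sum_add_distrib,
            ← Finset.mul_sum, ← Finset.mul_sum, ih k', ih (k'+1), ih (k'+2)]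
          rcases Nat.lt_trichotomy j k' with h | h | h
          · rw [if_neg (show ¬ k' ≤ j by omega), if_neg (show ¬ k'+1 ≤ j by omega),
              if_neg (show ¬ k'+2 ≤ j by omega), if_neg (show ¬ k'+1 ≤ j+1 by omega)]
            ring
          · rw [if_pos (show k' ≤ j by omega), if_neg (show ¬ k'+1 ≤ j by omega),
              if_neg (show ¬ k'+2 ≤ j by omega), if_pos (show k'+1 ≤ j+1 by omega),
              show j - k' = 0 by omega, show j + 1 - (k'+1) = 0 by omega, f_zero, f_zero]
            ring
          · obtain ⟨d, hd⟩ : ∃ d, j - k' = d + 1 := ⟨j - k' - 1, by omega⟩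
            rw [if_pos (show k' ≤ j by omega), if_pos (show k'+1 ≤ j by omega),
              if_pos (show k'+1 ≤ j+1 by omega), hd,
              show j + 1 - (k'+1) = d + 1 by omega, show j - (k'+1) = d by omega,
              show j - (k'+2) = d - 1 by omega, contig_f (k'+1) d]
            by_cases hc : k' + 2 ≤ j
            · rw [if_pos hc, if_neg (show ¬ d = 0 by omega)]
              push_cast; ring
            · rw [if_neg hc, if_pos (show d = 0 by omega)]
              push_cast; ring

end Aux16

namespace Aux16

noncomputable def calL (θ : ℕ → KF) (p : Polynomial KF) : KF := p.sum (fun i a => a * θ i)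

lemma calL_eq (θ : ℕ → KF) (p : Polynomial KF) (N : ℕ) (h : p.natDegree < N) :
    calL θ p = ∑ i ∈ Finset.range N, p.coeff i * θ i :=
  Polynomial.sum_over_range' p (fun n => by simp) N h

lemma calL_Xpow (θ : ℕ → KF) (j : ℕ) : calL θ (Polynomial.X ^ j) = θ j := by
  rw [calL_eq θ _ (j+1) (by simp [Polynomial.natDegree_X_pow])]
  rw [Finset.sum_eq_single j (fun i _ hij => by
        simp [Polynomial.coeff_X_pow, hij])
      (fun hj => absurd (Finset.self_mem_range_succ j) hj)]
  simp [Polynomial.coeff_X_pow]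

lemma calL_sub (θ : ℕ → KF) (p q : Polynomial KF) :
    calL θ (p - q) = calL θ p - calL θ q := by
  set N := max p.natDegree q.natDegree + 1 with hN
  have h1 : (p - q).natDegree < N := by
    have := Polynomial.natDegree_sub_le p q
    omega
  rw [calL_eq θ (p-q) N h1, calL_eq θ p N (by omega), calL_eq θ q N (by omega),
    ← Finset.sum_sub_distrib]
  apply Finset.sum_congr rfl
  intro i _
  rw [Polynomial.coeff_sub]
  ring

lemma calL_Cmul (θ : ℕ → KF) (c : KF) (p : Polynomial KF) :
    calL θ (Polynomial.C c * p) = c * calL θ p := by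
  have h1 : (Polynomial.C c * p).natDegree < p.natDegree + 1 :=
    Nat.lt_succ_of_le (Polynomial.natDegree_C_mul_le c p)
  rw [calL_eq θ _ (p.natDegree + 1) h1, calL_eq θ p (p.natDegree + 1) (Nat.lt_succ_self _),
    Finset.mul_sum]
  apply Finset.sum_congr rfl
  intro i _
  rw [Polynomial.coeff_C_mul]
  ring

noncomputable def Lam (k : ℕ) : KF := ∏ i ∈ Finset.range k, (((i:KF)+1+Xv) * ((i:KF)+Yv))

end Aux16


open Aux16

/-- Orthogonality of the associated Laguerre polynomials with respect to the moment
functional `calL` determined by `calL(x^n) = θ_n`, where the moments `θ_n` satisfy the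
convolution recurrence `∑_{k=0}^J θ_k (Y-1)_{J-k}(X)_{J-k}/(J-k)! = (Y)_J (X+1)_J/J!`:
we have `calL(x^s L_n(x; X, Y)) = 0` for `0 ≤ s ≤ n - 1`. -/
theorem stmt16 (L : ℕ → Polynomial KF)
    (hL0 : L 0 = 1)
    (hL1 : L 1 = Polynomial.X - Polynomial.C (Xv + Yv))
    (hLrec : ∀ n : ℕ, L (n + 2) =
      (Polynomial.X - Polynomial.C (2 * ((n : KF) + 1) + Xv + Yv)) * L (n + 1)
        - Polynomial.C (((n : KF) + 1 + Xv) * ((n : KF) + 1 + Yv - 1)) * L n)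
    (θ : ℕ → KF) (hθ0 : θ 0 = 1)
    (hθ : ∀ J : ℕ, ∑ k ∈ Finset.range (J + 1),
        θ k * rf (Yv - 1) (J - k) * rf Xv (J - k) / ((J - k).factorial : KF)
        = rf Yv J * rf (Xv + 1) J / (J.factorial : KF))
    (n s : ℕ) (hs : s ≤ n - 1) (hn : 1 ≤ n) :
    (Polynomial.X ^ s * L n).sum (fun i a => a * θ i) = 0 := by
  have f0eq : ∀ m : ℕ, f 0 m = rf (Yv - 1) m * rf Xv m / ((m.factorial : ℕ) : KF) := by
    intro m
    unfold f
    rw [rf_congr (show (Yv - 1 + ((0:ℕ):KF)) = Yv - 1 by push_cast; ring) m,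
      rf_congr (show (Xv + ((0:ℕ):KF)) = Xv by push_cast; ring) m]
  have f1eq : ∀ m : ℕ, f 1 m = rf Yv m * rf (Xv + 1) m / ((m.factorial : ℕ) : KF) := by
    intro m
    unfold f
    rw [rf_congr (show (Yv - 1 + ((1:ℕ):KF)) = Yv by push_cast; ring) m,
      rf_congr (show (Xv + ((1:ℕ):KF)) = Xv + 1 by push_cast; ring) m]
  have hconv : ∀ J : ℕ, ∑ k ∈ Finset.range (J + 1), θ k * f 0 (J - k) = f 1 J := by
    intro J
    rw [f1eq, ← hθ J]
    apply Finset.sum_congr rfl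
    intro k _
    rw [f0eq]
    ring
  -- the moments coincide with the coefficients of x^j on L_0
  have key : ∀ J, θ J = mu J 0 := by
    intro J
    induction J using Nat.strong_induction_on with
    | _ J ih =>
      have h1 := hconv J
      have h2 := Skey J 0
      rw [if_pos (Nat.zero_le J), Nat.sub_zero] at h2
      rw [Finset.sum_range_succ] at h1 h2
      rw [Nat.sub_self, f_zero, mul_one] at h1 h2
      have h3 : ∑ k ∈ Finset.range J, θ k * f 0 (J-k)
          = ∑ k ∈ Finset.range J, mu k 0 * f 0 (J-k) :=
        Finset.sum_congr rfl (fun k hk => by rw [ih k (Finset.mem_range.mp hk)])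
      have h4 := h1.trans h2.symm
      rw [h3] at h4
      exact add_left_cancel h4
  -- the functional against x^j L_k
  have nu : ∀ k j, calL θ (Polynomial.X ^ j * L k) = Lam k * mu j k := by
    intro k
    induction k using Nat.strong_induction_on with
    | _ k ih =>
      match k with
      | 0 =>
          intro j
          rw [hL0, mul_one, calL_Xpow, key j]
          simp [Lam]
      | 1 =>
          intro j
          rw [hL1, show Polynomial.X ^ j * (Polynomial.X - Polynomial.C (Xv + Yv))
              = Polynomial.X ^ (j+1) - Polynomial.C (Xv+Yv) * Polynomial.X ^ j by ring,
            calL_sub, calL_Cmul, calL_Xpow, calL_Xpow, key (j+1), key j, mu_succ0]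
          rw [show Lam 1 = (((0:ℕ):KF)+1+Xv) * (((0:ℕ):KF)+Yv) by
            rw [Lam, Finset.prod_range_one]]
          push_cast
          ring
      | (k+2) =>
          intro j
          rw [hLrec k, show Polynomial.X ^ j
                * ((Polynomial.X - Polynomial.C (2*((k:KF)+1)+Xv+Yv)) * L (k+1)
                  - Polynomial.C (((k:KF)+1+Xv) * ((k:KF)+1+Yv-1)) * L k)
              = (Polynomial.X ^ (j+1) * L (k+1))
                - Polynomial.C (2*((k:KF)+1)+Xv+Yv) * (Polynomial.X ^ j * L (k+1))
                - Polynomial.C (((k:KF)+1+Xv) * ((k:KF)+1+Yv-1)) * (Polynomial.X ^ j * L k)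
              by ring,
            calL_sub, calL_sub, calL_Cmul, calL_Cmul,
            ih (k+1) (by omega) (j+1), ih (k+1) (by omega) j, ih k (by omega) j,
            mu_succ j k]
          rw [show Lam (k+1) = Lam k * (((k:ℕ):KF)+1+Xv) * (((k:ℕ):KF)+Yv) by
              rw [Lam, Lam, Finset.prod_range_succ]; ring,
            show Lam (k+2) = Lam (k+1) * ((((k+1:ℕ)):KF)+1+Xv) * ((((k+1:ℕ)):KF)+Yv) by
              rw [Lam, Lam, Finset.prod_range_succ]; ring,
            show Lam (k+1) = Lam k * (((k:ℕ):KF)+1+Xv) * (((k:ℕ):KF)+Yv) by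
              rw [Lam, Lam, Finset.prod_range_succ]; ring]
          push_cast
          ring
  show calL θ (Polynomial.X ^ s * L n) = 0
  rw [nu n s, mu_vanish s n (by omega), mul_zero]
end

section
/- For s >= 1, define the polynomial p(J) = (Y+J)_s (X+J+1)_s - sum_{p=0}^{s-1} theta_p(X,Y) * (J+s)(J+s-1)...(J+s-p+1) * (Y-1)(Y+J)_{s-p-1} * X * (X+J+1)_{s-p-1}, where theta_p are the moments satisfying sum_{k=0}^J theta_k (Y-1)_{J-k}(X)_{J-k}/(J-k)! = (Y)_J (X+1)_J/J!. Then p(J) vanishes at J = -1, -2, ..., -s; that is, p(J) is divisible by (J+1)(J+2)...(J+s) as a polynomial in J. -/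
lemma rf_add {R : Type} [CommRing R] (a : R) (m n : ℕ) :
    rf a (m + n) = rf a m * rf (a + m) n := by
  unfold rf
  rw [Finset.prod_range_add]
  refine congrArg _ (Finset.prod_congr rfl fun i _ => ?_)
  push_cast
  ring

lemma rf_one {R : Type} [CommRing R] (a : R) : rf a 1 = a := by simp [rf]

lemma rf_succ_left {R : Type} [CommRing R] (a : R) (n : ℕ) :
    rf a (n + 1) = a * rf (a + 1) n := by
  rw [Nat.add_comm, rf_add, rf_one, Nat.cast_one]

/-- The polynomial
`p(J) = (Y+J)_s (X+J+1)_s - ∑_{p=0}^{s-1} θ_p (J+s)⋯(J+s-p+1) (Y-1)(Y+J)_{s-p-1} X (X+J+1)_{s-p-1}`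
vanishes at `J = -1, -2, …, -s`; here `θ_p` are the associated Laguerre moments, determined
by the convolution identity `∑_{k=0}^J θ_k (Y-1)_{J-k}(X)_{J-k}/(J-k)! = (Y)_J(X+1)_J/J!`. -/
theorem stmt17 (θ : ℕ → KF) (hθ0 : θ 0 = 1)
    (hθ : ∀ J : ℕ, ∑ k ∈ Finset.range (J + 1),
        θ k * rf (Yv - 1) (J - k) * rf Xv (J - k) / ((J - k).factorial : KF)
        = rf Yv J * rf (Xv + 1) J / (J.factorial : KF))
    (s : ℕ) (hs : 1 ≤ s) (k : ℕ) (hk1 : 1 ≤ k) (hks : k ≤ s) :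
    rf (Yv + (-(k : KF))) s * rf (Xv + (-(k : KF)) + 1) s
      - ∑ p ∈ Finset.range s, θ p * (∏ i ∈ Finset.range p, ((-(k : KF)) + (s : KF) - (i : KF))) *
          (Yv - 1) * rf (Yv + (-(k : KF))) (s - p - 1) * Xv
          * rf (Xv + (-(k : KF)) + 1) (s - p - 1) = 0 := by
  haveI hch : CharZero KF := charZero_of_injective_algebraMap (algebraMap ℚ KF).injective
  obtain ⟨k', rfl⟩ : ∃ k', k = k' + 1 := ⟨k - 1, by omega⟩
  obtain ⟨m, rfl⟩ : ∃ m, s = k' + (m + 1) := ⟨s - (k' + 1), by omega⟩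
  set K : KF := -((k' + 1 : ℕ) : KF) with hK
  have hYK : Yv + K + (k' : KF) = Yv - 1 := by rw [hK]; push_cast; ring
  have hXK : Xv + K + 1 + (k' : KF) = Xv := by rw [hK]; push_cast; ring
  set C : KF := rf (Yv + K) k' * rf (Xv + K + 1) k' * (Yv - 1) * Xv with hC
  -- factorials are nonzero
  have hfne : ∀ n : ℕ, ((n.factorial : KF) ≠ 0) := fun n =>
    Nat.cast_ne_zero.2 n.factorial_ne_zero
  -- Left-hand product
  have hlhs : rf (Yv + K) (k' + (m + 1)) * rf (Xv + K + 1) (k' + (m + 1))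
      = C * (rf Yv m * rf (Xv + 1) m) := by
    rw [rf_add (Yv + K) k' (m + 1), rf_add (Xv + K + 1) k' (m + 1), hYK, hXK,
      rf_succ_left (Yv - 1), rf_succ_left Xv]
    rw [show Yv - 1 + 1 = Yv by ring]
    ring
  -- The inner sum
  have hS : ∑ p ∈ Finset.range (m + 1),
      θ p * (m.descFactorial p : KF) * rf (Yv - 1) (m - p) * rf Xv (m - p)
      = rf Yv m * rf (Xv + 1) m := by
    have h1 : ∀ p ∈ Finset.range (m + 1),
        θ p * (m.descFactorial p : KF) * rf (Yv - 1) (m - p) * rf Xv (m - p)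
        = (θ p * rf (Yv - 1) (m - p) * rf Xv (m - p) / ((m - p).factorial : KF))
          * (m.factorial : KF) := by
      intro p hp
      have hpm : p ≤ m := by simpa using Nat.lt_succ_iff.mp (Finset.mem_range.mp hp)
      have hfac : ((m - p).factorial : KF) * (m.descFactorial p : KF) = (m.factorial : KF) := by
        rw [← Nat.cast_mul, Nat.factorial_mul_descFactorial hpm]
      rw [div_mul_eq_mul_div, eq_div_iff (hfne (m - p))]
      linear_combination (θ p * rf (Yv - 1) (m - p) * rf Xv (m - p)) * hfac
    rw [Finset.sum_congr rfl h1, ← Finset.sum_mul, hθ m,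
      div_mul_cancel₀ _ (hfne m)]
  -- The big sum
  have hsum : ∑ p ∈ Finset.range (k' + (m + 1)), θ p *
        (∏ i ∈ Finset.range p, (K + ((k' + (m + 1) : ℕ) : KF) - (i : KF))) *
        (Yv - 1) * rf (Yv + K) (k' + (m + 1) - p - 1) * Xv
        * rf (Xv + K + 1) (k' + (m + 1) - p - 1)
      = C * ∑ p ∈ Finset.range (m + 1),
          θ p * (m.descFactorial p : KF) * rf (Yv - 1) (m - p) * rf Xv (m - p) := by
    rw [Finset.mul_sum]
    rw [← Finset.sum_subset (Finset.range_subset_range.2 (by omega : m + 1 ≤ k' + (m + 1)))]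
    · refine Finset.sum_congr rfl fun p hp => ?_
      have hpm : p ≤ m := by simpa using Nat.lt_succ_iff.mp (Finset.mem_range.mp hp)
      have hprod : (∏ i ∈ Finset.range p, (K + ((k' + (m + 1) : ℕ) : KF) - (i : KF)))
          = (m.descFactorial p : KF) := by
        rw [Nat.descFactorial_eq_prod_range, Nat.cast_prod]
        refine Finset.prod_congr rfl fun i hi => ?_
        have him : i ≤ m := le_trans (Nat.le_of_lt_succ (Nat.lt_of_lt_of_le
          (Finset.mem_range.mp hi) (by omega))) (le_refl m)
        rw [Nat.cast_sub him, hK]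
        push_cast
        ring
      have hidx : k' + (m + 1) - p - 1 = k' + (m - p) := by omega
      rw [hprod, hidx, rf_add (Yv + K) k' (m - p), rf_add (Xv + K + 1) k' (m - p),
        hYK, hXK, hC]
      ring
    · intro p hp hnp
      have hmp : m < p := by
        simp only [Finset.mem_range, not_lt] at hnp
        omega
      have : (∏ i ∈ Finset.range p, (K + ((k' + (m + 1) : ℕ) : KF) - (i : KF))) = 0 := by
        apply Finset.prod_eq_zero (Finset.mem_range.mpr hmp)
        rw [hK]; push_cast; ring
      rw [this]
      ring
  rw [hlhs, hsum, hS]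
  ring
end

section
/- In the alternative representation of a permutation tableau T (a filling of a Ferrers diagram with up-arrows and left-arrows such that each column contains exactly one up-arrow and no arrow points to another arrow), a column is unrestricted (contains no 0 having a 1 to its left in the same row, in the 0/1 permutation tableau) if and only if there is no arrow strictly to the northwest of the up-arrow in that column. -/
/-- A permutation tableau of length `n`.  The southeast border of the Ferrers diagram is
labeled `1, …, n` (here `Fin n`) from northeast to southwest; `cols` is the set of column
labels (the remaining labels are rows).  A cell exists at row `r` and column `c` exactly
when `r ∉ cols`, `c ∈ cols` and `r < c` (columns to the left of a row have larger labels,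
rows above a cell have smaller labels).  `fill r c = true` means the cell contains a `1`.
Every column contains at least one `1`, and no `0` has simultaneously a `1` above it in its
column and a `1` to its left in its row. -/
structure PTab (n : ℕ) where
  cols : Finset (Fin n)
  fill : Fin n → Fin n → Bool
  fill_supp : ∀ r c, fill r c = true → r ∉ cols ∧ c ∈ cols ∧ r < c
  col_one : ∀ c ∈ cols, ∃ r, fill r c = true
  zero_cond : ∀ r c, r ∉ cols → c ∈ cols → r < c → fill r c = false →
    (∃ r', r' < r ∧ fill r' c = true) → (∃ c', c < c' ∧ fill r c' = true) → False

/-- The cell `(r, c)` carries the up-arrow of column `c` in the alternative representation,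
i.e. it contains the topmost `1` of column `c`. -/
def upArrow {n : ℕ} (T : PTab n) (r c : Fin n) : Prop :=
  T.fill r c = true ∧ ∀ r', r' < r → T.fill r' c = false

/-- The cell `(r, c)` contains a restricted `0`: it is a cell, filled with `0`, with a `1`
above it in its column. -/
def restrictedZero {n : ℕ} (T : PTab n) (r c : Fin n) : Prop :=
  r ∉ T.cols ∧ c ∈ T.cols ∧ r < c ∧ T.fill r c = false ∧ ∃ r', r' < r ∧ T.fill r' c = true

/-- The cell `(r, c)` carries a left-arrow in the alternative representation, i.e. it
contains the rightmost restricted `0` of row `r` (columns further right have smaller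
labels). -/
def leftArrow {n : ℕ} (T : PTab n) (r c : Fin n) : Prop :=
  restrictedZero T r c ∧ ∀ c', c' < c → ¬ restrictedZero T r c'

/-- The cell `(r, c)` carries an arrow in the alternative representation. -/
def arrow {n : ℕ} (T : PTab n) (r c : Fin n) : Prop :=
  upArrow T r c ∨ leftArrow T r c

/-- Column `c` is unrestricted: it contains no `0` having a `1` to its left in its row
(columns to the left have larger labels). -/
def colUnrestricted {n : ℕ} (T : PTab n) (c : Fin n) : Prop :=
  ¬ ∃ r, r ∉ T.cols ∧ r < c ∧ T.fill r c = false ∧ ∃ c', c < c' ∧ T.fill r c' = true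

/-- Lemma 4.2: in the alternative representation of a permutation tableau, a column is
unrestricted if and only if there is no arrow strictly to the northwest of the up-arrow of
the column (a cell `(r, c')` with `r` above `r₀` and `c'` to the left of `c`, i.e.
`r < r₀` and `c < c'`). -/
theorem stmt18 {n : ℕ} (T : PTab n) (c : Fin n) (hc : c ∈ T.cols)
    (r₀ : Fin n) (h : upArrow T r₀ c) :
    colUnrestricted T c ↔ ¬ ∃ r c', r < r₀ ∧ c < c' ∧ arrow T r c' := by
  have hr₀c : r₀ < c := (T.fill_supp r₀ c h.1).2.2
  unfold colUnrestricted
  rw [not_iff_not]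
  constructor
  · rintro ⟨r, hr, hrc, hf0, c', hcc', hf1⟩
    -- r < r₀
    have hrr₀ : r < r₀ := by
      rcases lt_trichotomy r r₀ with h'|h'|h'
      · exact h'
      · exact absurd h.1 (by rw [← h']; simp [hf0])
      · exact absurd (T.zero_cond r c hr hc hrc hf0 ⟨r₀, h', h.1⟩ ⟨c', hcc', hf1⟩) id
    -- topmost 1 of column c'
    classical
    set S : Finset (Fin n) := Finset.univ.filter (fun x => T.fill x c' = true) with hS
    have hne : S.Nonempty := ⟨r, by simp [hS, hf1]⟩
    set m := S.min' hne with hm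
    have hmS : m ∈ S := S.min'_mem hne
    have hmfill : T.fill m c' = true := by simpa [hS] using hmS
    have hmr : m ≤ r := S.min'_le r (by simp [hS, hf1])
    refine ⟨m, c', lt_of_le_of_lt hmr hrr₀, hcc', Or.inl ⟨hmfill, ?_⟩⟩
    intro r' hr'
    rcases Bool.eq_false_or_eq_true (T.fill r' c') with h'|h'
    · exact absurd (S.min'_le r' (by simp [hS, h'])) (not_le.mpr hr')
    · exact h'
  · rintro ⟨r, c', hrr₀, hcc', hu | hl⟩
    · have hrcols : r ∉ T.cols := (T.fill_supp r c' hu.1).1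
      exact ⟨r, hrcols, lt_trans hrr₀ hr₀c, h.2 r hrr₀, c', hcc', hu.1⟩
    · obtain ⟨⟨hrnc, hcc2, hrc', hf0', r'', hr''r, hf1''⟩, _⟩ := hl
      have hr''cols : r'' ∉ T.cols := (T.fill_supp r'' c' hf1'').1
      have hr''r₀ : r'' < r₀ := lt_trans hr''r hrr₀
      exact ⟨r'', hr''cols, lt_trans hr''r₀ hr₀c, h.2 r'' hr''r₀, c', hcc', hf1''⟩
end
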